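/- The four states |000⟩, |+1−⟩, |1−+⟩, |−+1⟩ in ℂ² ⊗ ℂ² ⊗ ℂ² (where |±⟩ = (|0⟩ ± |1⟩)/√2) are mutually orthogonal, and no nonzero product vector a ⊗ b ⊗ c in ℂ² ⊗ ℂ² ⊗ ℂ² is orthogonal to all four; i.e., Shifts is a UPB. -/

import Mathlib

noncomputable def ket0 : EuclideanSpace ℂ (Fin 2) := WithLp.toLp 2 (![1, 0] : Fin 2 → ℂ)
noncomputable def ket1 : EuclideanSpace ℂ (Fin 2) := WithLp.toLp 2 (![0, 1] : Fin 2 → ℂ)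
noncomputable def ketP : EuclideanSpace ℂ (Fin 2) :=
  WithLp.toLp 2 (![(1 / Real.sqrt 2 : ℝ), (1 / Real.sqrt 2 : ℝ)] : Fin 2 → ℂ)
noncomputable def ketM : EuclideanSpace ℂ (Fin 2) :=
  WithLp.toLp 2 (![(1 / Real.sqrt 2 : ℝ), (-(1 / Real.sqrt 2) : ℝ)] : Fin 2 → ℂ)

/-- The Shifts states |000⟩, |+1−⟩, |1−+⟩, |−+1⟩, given by their three
tensor factors. -/
noncomputable def shifts : Fin 4 → Fin 3 → EuclideanSpace ℂ (Fin 2) :=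
  ![![ket0, ket0, ket0], ![ketP, ket1, ketM], ![ket1, ketM, ketP], ![ketM, ketP, ket1]]

/-! Any two of the states carry the orthogonal pair `|0⟩, |1⟩` or `|+⟩, |−⟩` in some factor.
If a product vector `c 0 ⊗ c 1 ⊗ c 2` were orthogonal to all four states, each state would be
killed by some factor, so by pigeonhole two distinct states `j ≠ k` are killed by the same factor
`i`. But in every factor the four states use each of `|0⟩, |1⟩, |+⟩, |−⟩` exactly once, and any
two of these are linearly independent, hence span `ℂ²`; so `c i = 0`. -/

open Module Submodule

theorem eq_zero_of_inner_eq_zero_of_linearIndependent_pair {𝕜 E : Type*} [RCLike 𝕜]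
    [NormedAddCommGroup E] [InnerProductSpace 𝕜 E] (hE : finrank 𝕜 E = 2) {u w v : E}
    (huw : LinearIndependent 𝕜 ![u, w]) (hu : inner 𝕜 v u = 0) (hw : inner 𝕜 v w = 0) :
    v = 0 := by
  have hspan : span 𝕜 (Set.range ![u, w]) = ⊤ :=
    huw.span_eq_top_of_card_eq_finrank (by simp [hE])
  have hle : span 𝕜 (Set.range ![u, w]) ≤ (𝕜 ∙ v)ᗮ := by
    rw [span_le, Matrix.range_cons_cons_empty, Set.insert_subset_iff, Set.singleton_subset_iff]
    exact ⟨mem_orthogonal_singleton_iff_inner_right.mpr hu,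
      mem_orthogonal_singleton_iff_inner_right.mpr hw⟩
  have hv : v ∈ (𝕜 ∙ v)ᗮ := hle (hspan ▸ mem_top)
  exact inner_self_eq_zero.mp (mem_orthogonal_singleton_iff_inner_right.mp hv)

theorem linearIndependent_pair_of_det_ne_zero {K : Type*} [Field K] {p : ENNReal}
    {x y : WithLp p (Fin 2 → K)} (h : x 0 * y 1 - x 1 * y 0 ≠ 0) :
    LinearIndependent K ![x, y] := by
  refine LinearIndependent.pair_iff.mpr fun s t hst ↦ ?_
  have h0 : s * x 0 + t * y 0 = 0 := by
    simpa only [WithLp.ofLp_add, WithLp.ofLp_smul, WithLp.ofLp_zero, Pi.add_apply, Pi.smul_apply,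
      Pi.zero_apply, smul_eq_mul] using congr(WithLp.ofLp $hst 0)
  have h1 : s * x 1 + t * y 1 = 0 := by
    simpa only [WithLp.ofLp_add, WithLp.ofLp_smul, WithLp.ofLp_zero, Pi.add_apply, Pi.smul_apply,
      Pi.zero_apply, smul_eq_mul] using congr(WithLp.ofLp $hst 1)
  constructor
  · refine (mul_eq_zero.mp ?_).resolve_right h
    linear_combination y 1 * h0 - y 0 * h1
  · refine (mul_eq_zero.mp ?_).resolve_right h
    linear_combination x 0 * h1 - x 1 * h0

theorem exists_inner_shifts_eq_zero_of_ne {j k : Fin 4} (hjk : j ≠ k) :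
    ∃ i : Fin 3, (inner ℂ (shifts j i) (shifts k i) : ℂ) = 0 := by
  fin_cases j <;> fin_cases k <;>
    simp [Fin.exists_fin_succ, shifts, ket0, ket1, ketP, ketM, PiLp.inner_apply] at hjk ⊢

theorem linearIndependent_shifts_pair {j k : Fin 4} (hjk : j ≠ k) (i : Fin 3) :
    LinearIndependent ℂ ![shifts j i, shifts k i] := by
  refine linearIndependent_pair_of_det_ne_zero ?_
  fin_cases j <;> fin_cases k <;> fin_cases i <;> simp [shifts, ket0, ket1, ketP, ketM] at hjk ⊢ <;>
    norm_num [← Complex.ofReal_inv, ← Complex.ofReal_mul, ← Complex.ofReal_neg,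
      ← Complex.ofReal_sub, ← mul_inv, Real.mul_self_sqrt]

/-- Shifts is a UPB: the four states are mutually orthogonal (orthogonality of
product states holds iff it holds in some tensor factor), and no product vector
a ⊗ b ⊗ c with all factors nonzero is orthogonal to all four. -/
theorem stmt11 :
    (∀ j k : Fin 4, j ≠ k → ∃ i : Fin 3, (inner ℂ (shifts j i) (shifts k i) : ℂ) = 0) ∧
    ¬ ∃ c : Fin 3 → EuclideanSpace ℂ (Fin 2),
        (∀ i, c i ≠ 0) ∧ ∀ j : Fin 4, ∃ i : Fin 3, (inner ℂ (c i) (shifts j i) : ℂ) = 0 := by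
  refine ⟨fun j k ↦ exists_inner_shifts_eq_zero_of_ne, ?_⟩
  rintro ⟨c, hc, horth⟩
  choose f hf using horth
  obtain ⟨j, k, hjk, hfjk⟩ := Fintype.exists_ne_map_eq_of_card_lt f (by simp)
  refine hc (f k) (eq_zero_of_inner_eq_zero_of_linearIndependent_pair finrank_euclideanSpace_fin
    (linearIndependent_shifts_pair hjk (f k)) ?_ (hf k))
  simpa only [hfjk] using hf j
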